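/- (Identification.) Let Φ be an m×d real matrix with restricted isometry constants satisfying δ_{2s} ≤ δ_{4s} ≤ 0.1. Let r ∈ ℝ^d be a 2s-sparse vector, let e ∈ ℝ^m, set v = Φr + e and form the signal proxy y = Φ*v. Let Ω ⊆ {1,…,d} be a set of 2s coordinates of y of largest magnitude. Then ‖r|_{Ω^c}‖₂ ≤ 0.2223 ‖r‖₂ + 2.34 ‖e‖₂. -/

import Mathlib

/-- The Euclidean (ℓ2) norm of a finitely-indexed real vector. -/
noncomputable def l2 {ι : Type*} [Fintype ι] (v : ι → ℝ) : ℝ :=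
  Real.sqrt (∑ i, (v i) ^ 2)

/-- A vector is `s`-sparse if it has at most `s` nonzero coordinates. -/
def Sparse {d : ℕ} (s : ℕ) (v : Fin d → ℝ) : Prop :=
  {i | v i ≠ 0}.ncard ≤ s

/-- `δ` satisfies the restricted isometry inequalities of `Φ` at sparsity level `r`
(quadratic form); `δ_r ≤ δ` is equivalent to this (for `δ ≥ 0`). -/
def RICq {m d : ℕ} (Φ : Matrix (Fin m) (Fin d) ℝ) (r : ℕ) (δ : ℝ) : Prop :=
  ∀ v : Fin d → ℝ, Sparse r v →
    (1 - δ) * (l2 v) ^ 2 ≤ (l2 (Φ.mulVec v)) ^ 2 ∧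
      (l2 (Φ.mulVec v)) ^ 2 ≤ (1 + δ) * (l2 v) ^ 2

/-!
Write the proxy as `y = r + w` with `w = (ΦᵀΦ - 1) r + Φᵀ e`. On a set `T` of at most `2s`
coordinates, testing `w` against its own restriction `z = w|_T` gives
`‖z‖² = (⟪Φz, Φr⟫ - ⟪z, r⟫) + ⟪Φz, e⟫ ≤ (δ ‖r‖ + √(1 + δ) ‖e‖) ‖z‖`,
by the restricted isometry property applied to the `4s`-sparse pair `(z, r)` and to `z`;
hence `‖w|_T‖ ≤ δ ‖r‖ + √(1 + δ) ‖e‖`.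

With `R = supp r`, the part of `r` missed by `Ω` lives on `R \ Ω`, where `r = y - w`.
Since `|R \ Ω| ≤ |Ω \ R|` and `Ω` carries the largest entries of `y`,
`‖y|_{R \ Ω}‖ ≤ ‖y|_{Ω \ R}‖ = ‖w|_{Ω \ R}‖`. Altogether
`‖r|_{Ωᶜ}‖ ≤ 2 (‖r‖ / 10 + √1.1 ‖e‖) ≤ 0.2223 ‖r‖ + 2.34 ‖e‖`.
-/

open Finset Matrix Function

lemma Finset.sum_le_sum_of_card_le_of_forall_le {ι M : Type*} [AddCommMonoid M] [LinearOrder M]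
    [IsOrderedAddMonoid M] {A B : Finset ι} {g : ι → M} (hcard : A.card ≤ B.card)
    (hB : ∀ i ∈ B, 0 ≤ g i) (hle : ∀ i ∈ B, ∀ j ∈ A, g j ≤ g i) :
    ∑ j ∈ A, g j ≤ ∑ i ∈ B, g i := by
  rcases B.eq_empty_or_nonempty with rfl | hBne
  · simp [card_eq_zero.mp (Nat.le_zero.mp hcard)]
  obtain ⟨i₀, hi₀, hmin⟩ := B.exists_min_image g hBne
  calc ∑ j ∈ A, g j ≤ A.card • g i₀ := sum_le_card_nsmul _ _ _ (hle i₀ hi₀)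
    _ ≤ B.card • g i₀ := nsmul_le_nsmul_left (hB i₀ hi₀) hcard
    _ ≤ ∑ i ∈ B, g i := card_nsmul_le_sum _ _ _ hmin

section L2

variable {ι : Type*} [Fintype ι]

lemma l2_eq_norm (v : ι → ℝ) : l2 v = ‖WithLp.toLp 2 v‖ := by
  simp [l2, EuclideanSpace.norm_eq]

lemma l2_nonneg (v : ι → ℝ) : 0 ≤ l2 v := Real.sqrt_nonneg _

lemma l2_sq (v : ι → ℝ) : l2 v ^ 2 = ∑ i, v i ^ 2 :=
  Real.sq_sqrt (sum_nonneg fun _ _ => sq_nonneg _)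

lemma l2_eq_zero_iff {v : ι → ℝ} : l2 v = 0 ↔ v = 0 := by
  rw [l2_eq_norm, norm_eq_zero, WithLp.toLp_eq_zero]

lemma l2_sq_eq_dotProduct (v : ι → ℝ) : l2 v ^ 2 = v ⬝ᵥ v := by
  simp only [l2_sq, dotProduct, ← sq]

lemma l2_sub_le (u v : ι → ℝ) : l2 (u - v) ≤ l2 u + l2 v := by
  simpa only [l2_eq_norm, WithLp.toLp_sub] using norm_sub_le _ _

lemma l2_smul (c : ℝ) (v : ι → ℝ) : l2 (c • v) = |c| * l2 v := by
  simp only [l2_eq_norm, WithLp.toLp_smul, norm_smul, Real.norm_eq_abs]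

lemma abs_dotProduct_le_l2_mul_l2 (u v : ι → ℝ) : |u ⬝ᵥ v| ≤ l2 u * l2 v := by
  simpa only [l2_eq_norm, EuclideanSpace.inner_toLp_toLp, star_trivial, dotProduct_comm v u]
    using abs_real_inner_le_norm (WithLp.toLp 2 u) (WithLp.toLp 2 v)

lemma l2_indicator_sq (T : Finset ι) (v : ι → ℝ) :
    l2 (Set.indicator ↑T v) ^ 2 = ∑ i ∈ T, v i ^ 2 := by
  rw [l2_sq, ← sum_indicator_subset _ (subset_univ T)]
  exact sum_congr rfl fun i _ => by by_cases hi : i ∈ T <;> simp [hi]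

lemma dotProduct_indicator_self (T : Finset ι) (v : ι → ℝ) :
    Set.indicator ↑T v ⬝ᵥ v = l2 (Set.indicator ↑T v) ^ 2 := by
  rw [l2_indicator_sq, dotProduct, ← sum_indicator_subset _ (subset_univ T)]
  exact sum_congr rfl fun i _ => by by_cases hi : i ∈ T <;> simp [hi, sq]

lemma l2_indicator_le_of_dotProduct_le {T : Finset ι} {v : ι → ℝ} {C : ℝ} (hC : 0 ≤ C)
    (h : Set.indicator ↑T v ⬝ᵥ v ≤ C * l2 (Set.indicator ↑T v)) :
    l2 (Set.indicator ↑T v) ≤ C := by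
  rw [dotProduct_indicator_self] at h
  nlinarith [l2_nonneg (Set.indicator ↑T v)]

end L2

lemma l2_indicator_sdiff_le_of_forall_abs_le {ι : Type*} [Fintype ι] [DecidableEq ι]
    {R Ω : Finset ι} {v : ι → ℝ} (hcard : R.card ≤ Ω.card)
    (hΩ : ∀ i ∈ Ω, ∀ j ∉ Ω, |v j| ≤ |v i|) :
    l2 (Set.indicator ↑(R \ Ω) v) ≤ l2 (Set.indicator ↑(Ω \ R) v) := by
  refine (pow_le_pow_iff_left₀ (l2_nonneg _) (l2_nonneg _) two_ne_zero).mp ?_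
  rw [l2_indicator_sq, l2_indicator_sq]
  refine sum_le_sum_of_card_le_of_forall_le (by grind) (fun i _ => sq_nonneg _)
    fun i hi j hj => sq_le_sq.mpr (hΩ i (mem_sdiff.mp hi).1 j (mem_sdiff.mp hj).2)

section RIP

variable {m d n : ℕ} {Φ : Matrix (Fin m) (Fin d) ℝ} {δ : ℝ}

lemma sparse_of_support_subset {v : Fin d → ℝ} {T : Finset (Fin d)} (hv : support v ⊆ ↑T)
    (hT : T.card ≤ n) : Sparse n v :=
  (Set.ncard_le_ncard hv T.finite_toSet).trans (by rwa [Set.ncard_coe_finset])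

lemma RICq.l2_mulVec_le (hΦ : RICq Φ n δ) {v : Fin d → ℝ} (hv : Sparse n v) :
    l2 (Φ *ᵥ v) ≤ √(1 + δ) * l2 v := by
  rw [← Real.sqrt_sq (l2_nonneg (Φ *ᵥ v)), ← Real.sqrt_sq (l2_nonneg v), ← Real.sqrt_mul']
  · exact Real.sqrt_le_sqrt (hΦ v hv).2
  · exact sq_nonneg _

lemma RICq.abs_dotProduct_sub_le_half (hΦ : RICq Φ n δ) {T : Finset (Fin d)} (hT : T.card ≤ n)
    {u w : Fin d → ℝ} (hu : support u ⊆ ↑T) (hw : support w ⊆ ↑T) :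
    |Φ *ᵥ u ⬝ᵥ Φ *ᵥ w - u ⬝ᵥ w| ≤ δ / 2 * (l2 u ^ 2 + l2 w ^ 2) := by
  have hadd := hΦ (u + w) (sparse_of_support_subset
    ((support_add u w).trans (Set.union_subset hu hw)) hT)
  have hsub := hΦ (u - w) (sparse_of_support_subset
    ((support_sub u w).trans (Set.union_subset hu hw)) hT)
  simp only [l2_sq_eq_dotProduct, mulVec_add, mulVec_sub, add_dotProduct, dotProduct_add,
    sub_dotProduct, dotProduct_sub, dotProduct_comm w u, dotProduct_comm (Φ *ᵥ w)] at hadd hsub ⊢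
  rw [abs_le]
  constructor <;> nlinarith

lemma RICq.abs_dotProduct_sub_le (hΦ : RICq Φ n δ) {T : Finset (Fin d)} (hT : T.card ≤ n)
    {u w : Fin d → ℝ} (hu : support u ⊆ ↑T) (hw : support w ⊆ ↑T) :
    |Φ *ᵥ u ⬝ᵥ Φ *ᵥ w - u ⬝ᵥ w| ≤ δ * (l2 u * l2 w) := by
  rcases (l2_nonneg u).eq_or_lt with hu0 | hupos
  · rw [← hu0, l2_eq_zero_iff.mp hu0.symm]
    simp
  rcases (l2_nonneg w).eq_or_lt with hw0 | hwpos
  · rw [← hw0, l2_eq_zero_iff.mp hw0.symm]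
    simp
  -- `‖w‖ • u` and `‖u‖ • w` have equal norms, so the half-sum bound becomes a product bound
  have key := hΦ.abs_dotProduct_sub_le_half hT (u := l2 w • u) (w := l2 u • w)
    ((support_const_smul_subset _ _).trans hu) ((support_const_smul_subset _ _).trans hw)
  simp only [mulVec_smul, smul_dotProduct, dotProduct_smul, smul_eq_mul, l2_smul,
    abs_of_pos hupos, abs_of_pos hwpos] at key
  rw [← mul_sub, ← mul_sub, abs_mul, abs_mul, abs_of_pos hupos, abs_of_pos hwpos] at key
  nlinarith [mul_pos hupos hwpos]

lemma RICq.l2_indicator_proxy_sub_le (hΦ : RICq Φ n δ) (hδ : 0 ≤ δ) {T R : Finset (Fin d)}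
    (hTR : (T ∪ R).card ≤ n) {r : Fin d → ℝ} (hr : support r ⊆ ↑R) (e : Fin m → ℝ) :
    l2 (Set.indicator ↑T (Φᵀ *ᵥ (Φ *ᵥ r + e) - r)) ≤ δ * l2 r + √(1 + δ) * l2 e := by
  set z := Set.indicator ↑T (Φᵀ *ᵥ (Φ *ᵥ r + e) - r)
  have hz : support z ⊆ ↑(T ∪ R) :=
    Set.support_indicator_subset.trans (by simp)
  have hdot : z ⬝ᵥ (Φᵀ *ᵥ (Φ *ᵥ r + e) - r)
      = (Φ *ᵥ z ⬝ᵥ Φ *ᵥ r - z ⬝ᵥ r) + Φ *ᵥ z ⬝ᵥ e := by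
    rw [dotProduct_sub, dotProduct_mulVec, vecMul_transpose, dotProduct_add]
    ring
  have hsignal : Φ *ᵥ z ⬝ᵥ Φ *ᵥ r - z ⬝ᵥ r ≤ δ * l2 r * l2 z := by
    have := hΦ.abs_dotProduct_sub_le hTR hz (hr.trans (by simp))
    linarith [le_abs_self (Φ *ᵥ z ⬝ᵥ Φ *ᵥ r - z ⬝ᵥ r)]
  have hnoise : Φ *ᵥ z ⬝ᵥ e ≤ √(1 + δ) * l2 e * l2 z := calc
    Φ *ᵥ z ⬝ᵥ e ≤ l2 (Φ *ᵥ z) * l2 e := (le_abs_self _).trans (abs_dotProduct_le_l2_mul_l2 _ _)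
    _ ≤ √(1 + δ) * l2 z * l2 e :=
      mul_le_mul_of_nonneg_right (hΦ.l2_mulVec_le (sparse_of_support_subset hz hTR)) (l2_nonneg e)
    _ = √(1 + δ) * l2 e * l2 z := by ring
  refine l2_indicator_le_of_dotProduct_le
    (add_nonneg (mul_nonneg hδ (l2_nonneg r)) (mul_nonneg (Real.sqrt_nonneg _) (l2_nonneg e))) ?_
  rw [hdot]
  linarith

end RIP

theorem stmt10_general (m d s : ℕ)
    (Φ : Matrix (Fin m) (Fin d) ℝ) (hΦ : RICq Φ (4 * s) (1 / 10))
    (r : Fin d → ℝ) (hr : Sparse (2 * s) r) (e : Fin m → ℝ)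
    (Ω : Finset (Fin d)) (hΩcard : Ω.card = 2 * s)
    (hΩ : ∀ i ∈ Ω, ∀ j ∉ Ω,
      |Φ.transpose.mulVec (Φ.mulVec r + e) j| ≤
        |Φ.transpose.mulVec (Φ.mulVec r + e) i|) :
    l2 (fun i => if i ∈ Ω then 0 else r i) ≤ 0.2223 * l2 r + 2.34 * l2 e := by
  set y := Φᵀ *ᵥ (Φ *ᵥ r + e)
  set R := univ.filter (r · ≠ 0)
  have hR : R.card ≤ 2 * s := by
    rw [← Set.ncard_coe_finset]
    simpa [R, Sparse] using hr
  have hproxy : ∀ T : Finset (Fin d), T.card ≤ 2 * s →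
      l2 (Set.indicator ↑T (y - r)) ≤ 1 / 10 * l2 r + √(1 + 1 / 10) * l2 e := fun T hT =>
    hΦ.l2_indicator_proxy_sub_le (by norm_num) ((card_union_le T R).trans (by omega))
      (by simp [R]) e
  have hmissed : (fun i => if i ∈ Ω then 0 else r i)
      = Set.indicator ↑(R \ Ω) y - Set.indicator ↑(R \ Ω) (y - r) := by
    ext i
    by_cases hi : i ∈ Ω <;> by_cases hri : r i = 0 <;> simp [R, hi, hri]
  have hspurious : Set.indicator ↑(Ω \ R) y = Set.indicator ↑(Ω \ R) (y - r) := by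
    ext i
    by_cases hri : r i = 0 <;> simp [R, hri, Set.indicator_apply]
  have hsqrt : √(1 + 1 / 10 : ℝ) ≤ 1.17 := Real.sqrt_le_iff.mpr ⟨by norm_num, by norm_num⟩
  calc l2 (fun i => if i ∈ Ω then 0 else r i)
      ≤ l2 (Set.indicator ↑(R \ Ω) y) + l2 (Set.indicator ↑(R \ Ω) (y - r)) :=
        hmissed ▸ l2_sub_le _ _
    _ ≤ l2 (Set.indicator ↑(Ω \ R) (y - r)) + l2 (Set.indicator ↑(R \ Ω) (y - r)) := by
        rw [← hspurious]
        gcongr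
        exact l2_indicator_sdiff_le_of_forall_abs_le (hR.trans hΩcard.ge) hΩ
    _ ≤ 2 * (1 / 10 * l2 r + √(1 + 1 / 10) * l2 e) := by
        linarith [hproxy (Ω \ R) ((card_le_card sdiff_subset).trans hΩcard.le),
          hproxy (R \ Ω) ((card_le_card sdiff_subset).trans hR)]
    _ ≤ 0.2223 * l2 r + 2.34 * l2 e := by nlinarith [l2_nonneg r, l2_nonneg e]

/-- **Identification.** Suppose `δ_{4s} ≤ 0.1` (hence also
`δ_{2s} ≤ δ_{4s} ≤ 0.1`). Let `r` be `2s`-sparse, `v = Φr + e`, `y = Φ*v`, and let `Ω`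
be a set of `2s` largest-magnitude coordinates of `y`. Then
`‖r|_{Ω^c}‖₂ ≤ 0.2223 ‖r‖₂ + 2.34 ‖e‖₂`. -/
theorem stmt10 (m d s : ℕ) (hs : 0 < s)
    (Φ : Matrix (Fin m) (Fin d) ℝ) (hΦ : RICq Φ (4 * s) (1 / 10))
    (r : Fin d → ℝ) (hr : Sparse (2 * s) r) (e : Fin m → ℝ)
    (Ω : Finset (Fin d)) (hΩcard : Ω.card = 2 * s)
    (hΩ : ∀ i ∈ Ω, ∀ j ∉ Ω,
      |Φ.transpose.mulVec (Φ.mulVec r + e) j| ≤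
        |Φ.transpose.mulVec (Φ.mulVec r + e) i|) :
    l2 (fun i => if i ∈ Ω then 0 else r i) ≤ 0.2223 * l2 r + 2.34 * l2 e :=
  stmt10_general m d s Φ hΦ r hr e Ω hΩcard hΩ
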